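/- arXiv:1602.05608 — 3 statements merged into one kernel-verified Lean document; each statement's English description precedes it below -/
import Mathlib

section
/- The biclique covering number of the complete graph K_n equals ⌈log₂ n⌉; that is, the edges of K_n can be covered by ⌈log₂ n⌉ complete bipartite subgraphs, and no fewer suffice (for the upper bound direction: ⌈log₂ n⌉ bicliques suffice). -/
/-!
A family of bicliques `(A i, B i)` indexed by `ι` assigns to each vertex `v` its membership
pattern `i ↦ (v ∈ A i)`. The bicliques cover every pair `u ≠ v` exactly when the patterns
separate `u` from `v`, so covers of a complete graph by `|ι|` bicliques correspond to injections
of its vertices into `ι → Bool`; these exist iff `n ≤ 2 ^ |ι|`.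
-/

open Function

section BicliqueCover

variable {α ι : Type*}

def IsBicliqueCover (A B : ι → Finset α) : Prop :=
  (∀ i, Disjoint (A i) (B i)) ∧
    ∀ u v : α, u ≠ v → ∃ i, (u ∈ A i ∧ v ∈ B i) ∨ (u ∈ B i ∧ v ∈ A i)

theorem IsBicliqueCover.injective_decide_mem [DecidableEq α] {A B : ι → Finset α} (h : IsBicliqueCover A B) :
    Injective fun v i => decide (v ∈ A i) := by
  intro u v huv
  by_contra hne
  obtain ⟨i, ⟨hu, hv⟩ | ⟨hu, hv⟩⟩ := h.2 u v hne
  · have hvA : v ∈ A i := by simpa [hu] using (congrFun huv i).symm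
    exact Finset.disjoint_left.mp (h.1 i) hvA hv
  · have huA : u ∈ A i := by simpa [hv] using congrFun huv i
    exact Finset.disjoint_left.mp (h.1 i) huA hu

theorem IsBicliqueCover.card_le_two_pow [Fintype α] [DecidableEq α] [Fintype ι] [DecidableEq ι] {A B : ι → Finset α}
    (h : IsBicliqueCover A B) : Fintype.card α ≤ 2 ^ Fintype.card ι := by
  simpa using Fintype.card_le_of_injective _ h.injective_decide_mem

theorem isBicliqueCover_of_injective [Fintype α] {f : α → ι → Bool} (hf : Injective f) :
    IsBicliqueCover (fun i => {v | f v i = true}) (fun i => {v | f v i = false}) := by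
  refine ⟨fun i => Finset.disjoint_filter.mpr fun v _ hv => by simp [hv], fun u v huv => ?_⟩
  obtain ⟨i, hi⟩ : ∃ i, f u i ≠ f v i := by
    by_contra! hsame
    exact huv (hf (funext hsame))
  refine ⟨i, ?_⟩
  cases hu : f u i <;> cases hv : f v i <;> simp_all

theorem exists_isBicliqueCover_of_card_le [Fintype α] [Fintype ι] [DecidableEq ι]
    (h : Fintype.card α ≤ 2 ^ Fintype.card ι) : ∃ A B : ι → Finset α, IsBicliqueCover A B := by
  obtain ⟨f⟩ := Function.Embedding.nonempty_of_card_le (β := ι → Bool) (by simpa using h)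
  exact ⟨_, _, isBicliqueCover_of_injective f.injective⟩

end BicliqueCover

theorem stmt_0_general (n : ℕ) :
    (∃ A B : Fin (Nat.clog 2 n) → Finset (Fin n),
      (∀ i, Disjoint (A i) (B i)) ∧
      (∀ u v : Fin n, u ≠ v →
        ∃ i, (u ∈ A i ∧ v ∈ B i) ∨ (u ∈ B i ∧ v ∈ A i))) ∧
    (∀ (q : ℕ) (A B : Fin q → Finset (Fin n)),
      (∀ i, Disjoint (A i) (B i)) →
      (∀ u v : Fin n, u ≠ v →
        ∃ i, (u ∈ A i ∧ v ∈ B i) ∨ (u ∈ B i ∧ v ∈ A i)) →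
      Nat.clog 2 n ≤ q) := by
  refine ⟨exists_isBicliqueCover_of_card_le ?_, fun q A B hdisj hcover => ?_⟩
  · simpa using Nat.le_pow_clog one_lt_two n
  · have hcard : n ≤ 2 ^ q := by
      simpa using IsBicliqueCover.card_le_two_pow ⟨hdisj, hcover⟩
    exact (Nat.clog_le_iff_le_pow one_lt_two).mpr hcard

/-- The biclique covering number of the complete graph `K_n` equals
`⌈log₂ n⌉`: its edges can be covered by `⌈log₂ n⌉` bicliques (complete bipartite
subgraphs, given by disjoint pairs of vertex sets), and no fewer bicliques suffice. -/
theorem stmt_0 (n : ℕ) (hn : 2 ≤ n) :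
    (∃ A B : Fin (Nat.clog 2 n) → Finset (Fin n),
      (∀ i, Disjoint (A i) (B i)) ∧
      (∀ u v : Fin n, u ≠ v →
        ∃ i, (u ∈ A i ∧ v ∈ B i) ∨ (u ∈ B i ∧ v ∈ A i))) ∧
    (∀ (q : ℕ) (A B : Fin q → Finset (Fin n)),
      (∀ i, Disjoint (A i) (B i)) →
      (∀ u v : Fin n, u ≠ v →
        ∃ i, (u ∈ A i ∧ v ∈ B i) ∨ (u ∈ B i ∧ v ∈ A i)) →
      Nat.clog 2 n ≤ q) :=
  stmt_0_general n
end

section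
/- Let G be a graph and S a set of vertex pairs such that every pair in S is connected in G by a path of length at most k. Then there exists a k-coloring of the edges of G that satisfies at least (k!/k^k)·|S| pairs from S (a pair is satisfied if it is joined by a rainbow path). -/
/-!
For a path `p` of length `ℓ ≤ k` in a graph with `m` edges, exactly
`k (k-1) ⋯ (k-ℓ+1) · k^(m-ℓ)` of the `k^m` edge colorings make `p` rainbow, and
`k (k-1) ⋯ (k-ℓ+1) ≥ k! / k^(k-ℓ)`, so at least a `k!/k^k` fraction of all colorings satisfies
any given pair of `S`. Double counting the incidences between colorings and the pairs they
satisfy, some coloring satisfies at least `(k!/k^k)·|S|` pairs.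
-/

open Finset Nat

theorem Set.natCard_injOn {α β : Type*} [Finite α] [Finite β] (s : Set α) :
    Nat.card {f : α → β // s.InjOn f} =
      (Nat.card β).descFactorial s.ncard * Nat.card β ^ sᶜ.ncard := by
  classical
  have : Fintype α := Fintype.ofFinite α
  have : Fintype β := Fintype.ofFinite β
  let e : {f : α → β // s.InjOn f} ≃ (s ↪ β) × (↥sᶜ → β) :=
    ((Equiv.piEquivPiSubtypeProd (· ∈ s) fun _ ↦ β).subtypeEquiv fun _ ↦
        Set.injOn_iff_injective).trans <|
      Equiv.prodSubtypeFstEquivSubtypeProd.trans <|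
        (Equiv.subtypeInjectiveEquivEmbedding s β).prodCongr (Equiv.refl _)
  rw [Nat.card_congr e, Nat.card_prod, Nat.card_fun, Nat.card_eq_fintype_card (α := s ↪ β),
    Fintype.card_embedding_eq, ← Nat.card_eq_fintype_card, ← Nat.card_eq_fintype_card,
    Nat.card_coe_set_eq, Nat.card_coe_set_eq]

theorem Nat.factorial_mul_pow_le_pow_mul_descFactorial_mul_pow {k ℓ : ℕ} (hℓ : ℓ ≤ k) (r : ℕ) :
    k ! * k ^ (ℓ + r) ≤ k ^ k * (k.descFactorial ℓ * k ^ r) := by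
  have hk : k ^ k = k ^ (k - ℓ) * k ^ ℓ := by rw [← pow_add, Nat.sub_add_cancel hℓ]
  calc k ! * k ^ (ℓ + r) = (k - ℓ)! * (k.descFactorial ℓ * k ^ ℓ * k ^ r) := by
        rw [← Nat.factorial_mul_descFactorial hℓ, pow_add]; ring
    _ ≤ k ^ (k - ℓ) * (k.descFactorial ℓ * k ^ ℓ * k ^ r) := by
        gcongr
        exact (Nat.factorial_le_pow _).trans (Nat.pow_le_pow_left (Nat.sub_le k ℓ) _)
    _ = k ^ k * (k.descFactorial ℓ * k ^ r) := by rw [hk]; ring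

theorem Finset.exists_mul_card_le_mul_natCard {Ω ι : Type*} [Finite Ω] [Nonempty Ω]
    (S : Finset ι) (P : Ω → ι → Prop) (a b : ℕ)
    (h : ∀ i ∈ S, a * Nat.card Ω ≤ b * Nat.card {ω // P ω i}) :
    ∃ ω, a * #S ≤ b * Nat.card {i // i ∈ S ∧ P ω i} := by
  classical
  have : Fintype Ω := Fintype.ofFinite Ω
  have hcard : ∀ ω, Nat.card {i // i ∈ S ∧ P ω i} = #{i ∈ S | P ω i} := fun ω ↦ by
    simp only [← mem_filter, Nat.card_eq_finsetCard]
  simp only [Nat.card_eq_fintype_card, Fintype.card_subtype] at h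
  have hsum : ∑ _ω : Ω, a * #S ≤ ∑ ω, b * #{i ∈ S | P ω i} :=
    calc ∑ _ω : Ω, a * #S = ∑ i ∈ S, a * Fintype.card Ω := by
          simp only [sum_const, card_univ, smul_eq_mul]; ring
      _ ≤ ∑ i ∈ S, b * #{ω | P ω i} := sum_le_sum h
      _ = ∑ ω, b * #{i ∈ S | P ω i} := by
          simp only [← mul_sum]
          exact congrArg (b * ·)
            (sum_card_bipartiteAbove_eq_sum_card_bipartiteBelow (r := fun i ω ↦ P ω i))
  obtain ⟨ω, -, hω⟩ := exists_le_of_sum_le univ_nonempty hsum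
  exact ⟨ω, hcard ω ▸ hω⟩

namespace SimpleGraph.Walk

variable {V β : Type*} {G : SimpleGraph V} {u v : V}

def IsRainbow (c : G.edgeSet → β) (p : G.Walk u v) : Prop :=
  (p.edges.pmap (fun e he ↦ c ⟨e, he⟩) fun _ he ↦ p.edges_subset_edgeSet he).Nodup

theorem IsTrail.isRainbow_iff_injOn {p : G.Walk u v} (hp : p.IsTrail) (c : G.edgeSet → β) :
    p.IsRainbow c ↔ {e : G.edgeSet | ↑e ∈ p.edges}.InjOn c := by
  unfold IsRainbow
  rw [← List.map_pmap (g := c) (f := Subtype.mk), List.nodup_map_iff_inj_on]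
  · simp only [List.mem_pmap, forall_exists_index, Set.InjOn]
    grind
  · exact hp.edges_nodup.pmap fun _ _ _ _ ↦ congrArg Subtype.val

theorem IsTrail.ncard_edges {p : G.Walk u v} (hp : p.IsTrail) :
    {e : G.edgeSet | ↑e ∈ p.edges}.ncard = p.length := by
  classical
  rw [← Set.preimage_ofPred_eq (p := (· ∈ p.edges)), Set.ncard_preimage_of_injective_subset_range
    Subtype.val_injective, ← List.coe_toFinset, Set.ncard_coe_finset,
    List.toFinset_card_of_nodup hp.edges_nodup, length_edges]
  rw [Subtype.range_coe]
  exact fun _ he ↦ p.edges_subset_edgeSet he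

theorem IsTrail.factorial_mul_card_le_pow_mul_card_isRainbow [Finite G.edgeSet] {k : ℕ}
    {p : G.Walk u v} (hp : p.IsTrail) (hlen : p.length ≤ k) :
    k ! * Nat.card (G.edgeSet → Fin k) ≤
      k ^ k * Nat.card {c : G.edgeSet → Fin k // p.IsRainbow c} := by
  set s := {e : G.edgeSet | ↑e ∈ p.edges}
  rw [Nat.card_congr (Equiv.subtypeEquivRight (hp.isRainbow_iff_injOn ·)), Set.natCard_injOn,
    Nat.card_fun, ← s.ncard_add_ncard_compl, hp.ncard_edges, Nat.card_fin]
  exact Nat.factorial_mul_pow_le_pow_mul_descFactorial_mul_pow hlen _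

end SimpleGraph.Walk

/-- if every pair of `S` is connected in `G` by a path of length at
most `k`, then there is a `k`-edge-coloring of `G` satisfying at least
`(k!/k^k)·|S|` of the pairs in `S` (a pair is satisfied if it is joined by a
rainbow path, i.e. a path whose edge colors are pairwise distinct). -/
theorem stmt_7 {V : Type*} [Fintype V] (G : SimpleGraph V) (k : ℕ) (hk : 2 ≤ k)
    (S : Finset (Sym2 V))
    (hS : ∀ u v : V, s(u, v) ∈ S → ∃ p : G.Walk u v, p.IsPath ∧ p.length ≤ k) :
    ∃ c : G.edgeSet → Fin k,
      ((Nat.factorial k : ℚ) / (k : ℚ) ^ k) * S.card ≤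
        Nat.card {e : Sym2 V // e ∈ S ∧ ∃ u v : V, e = s(u, v) ∧
          ∃ p : G.Walk u v, p.IsPath ∧
            (p.edges.pmap (fun e' he' => c ⟨e', he'⟩)
              (fun _ he' => p.edges_subset_edgeSet he')).Nodup} := by
  have : Nonempty (G.edgeSet → Fin k) := ⟨fun _ ↦ ⟨0, by omega⟩⟩
  obtain ⟨c, hc⟩ := S.exists_mul_card_le_mul_natCard
    (fun c e ↦ ∃ u v : V, e = s(u, v) ∧ ∃ p : G.Walk u v, p.IsPath ∧ p.IsRainbow c) (k !) (k ^ k)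
    fun e he ↦ by
      induction e using Sym2.ind with
      | _ u v =>
        obtain ⟨p, hp, hlen⟩ := hS u v he
        refine (hp.isTrail.factorial_mul_card_le_pow_mul_card_isRainbow hlen).trans ?_
        exact Nat.mul_le_mul_left _ <| Nat.card_le_card_of_injective _
          (Subtype.impEmbedding _ _ fun c hc ↦ ⟨u, v, rfl, p, hp, hc⟩).injective
  refine ⟨c, ?_⟩
  rw [div_mul_eq_mul_div, div_le_iff₀ (by positivity), mul_comm _ ((k : ℚ) ^ k)]
  exact_mod_cast hc
end

section
/- Let k ≥ 3 and consider a graph containing disjoint 'pendant' gadgets: for each vertex v of a base graph G, new vertices v₁¹, v₁², v₂, ..., v_{k−1} with edges v v₁¹, v v₁², v₁¹ v₂, v₁² v₂, v₂ v₃, ..., v_{k−2} v_{k−1}, pre-colored so that c(v v₁¹)=1, c(v v₁²)=2, c(v₁¹ v₂)=c(v₁² v₂)=3, and c(v_i v_{i+1})=i+2 for 2 ≤ i ≤ k−2. Then for any edge uv of G with u < v in some fixed order, every path of length at most k from u_{k−1} to v in the augmented graph is one of the two paths v u u₁¹ u₂ u₃ ⋯ u_{k−1} or v u u₁² u₂ u₃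 ⋯ u_{k−1}; consequently, in any k-edge-coloring extending the gadget pre-coloring in which u_{k−1} and v are joined by a rainbow path, the edge uv receives color 1 or color 2. -/
open Sum

/-- The attachment relation for the pendant gadgets of Lemma 2: for each base vertex
`v` the gadget vertices are encoded as `inr (v, i) : V ⊕ V × Fin k`, with
`(v, 0) = v₁¹`, `(v, 1) = v₁²` and `(v, i) = v_i` for `2 ≤ i ≤ k − 1`.  The gadget
edges are `v v₁¹, v v₁², v₁¹ v₂, v₁² v₂, v₂ v₃, …, v_{k−2} v_{k−1}`. -/
def gadgetRel {V : Type*} (G : SimpleGraph V) (k : ℕ) :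
    V ⊕ V × Fin k → V ⊕ V × Fin k → Prop := fun a b =>
  match a, b with
  | inl u, inl v => G.Adj u v
  | inl v, inr (w, i) => v = w ∧ (i.val = 0 ∨ i.val = 1)
  | inr (w, i), inr (w', j) =>
      w = w' ∧ ((i.val ≤ 1 ∧ j.val = 2) ∨ (2 ≤ i.val ∧ j.val = i.val + 1))
  | _, _ => False

/-- The augmented graph `G'` obtained from `G` by attaching a pendant gadget at
every vertex. -/
def gadgetGraph {V : Type*} (G : SimpleGraph V) (k : ℕ) :
    SimpleGraph (V ⊕ V × Fin k) :=
  SimpleGraph.fromRel (gadgetRel G k)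

/-
Give base vertices level 0, `w₁¹` and `w₁²` level 1 and `w_i` level `i`; adjacent vertices
differ in level by at most one, so the vertex at step `n` of a walk starting in `V` has level at
most `n`. Reading a walk of length at most `x + 1` from `v` to `u_x` backwards, the vertex before
`u_j` therefore has level at most `j`, and the only such neighbour of `u_j` is the rung below it
(`u₁¹` or `u₁²` below `u₂`, then `u`). So the walk is `v u u₁^a u₂ ⋯ u_x`, the step `v u` being
forced by `u ≠ v`. On it the edges after `vu` carry the colours `2, …, k − 1` of `Fin k`, so if
it is rainbow, `uv` has colour `0` or `1`.
-/

open SimpleGraph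

lemma SimpleGraph.Walk.apply_getVert_le {α : Type*} {G : SimpleGraph α} {f : α → ℕ}
    (hf : ∀ {a b}, G.Adj a b → f b ≤ f a + 1) {u v : α} (p : G.Walk u v) (n : ℕ) :
    f (p.getVert n) ≤ f u + n := by
  induction p generalizing n with
  | nil => simp
  | cons h p ih =>
    cases n with
    | zero => simp
    | succ n =>
      rw [Walk.getVert_cons_succ]
      have := hf h
      grind

section

variable {V : Type*} {G : SimpleGraph V} {k : ℕ}

-- the distance from the base vertex set `V` in `gadgetGraph G k`
def gadgetLevel : V ⊕ V × Fin k → ℕ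
  | inl _ => 0
  | inr (_, i) => max i.val 1

@[simp]
lemma gadgetLevel_inl (w : V) : gadgetLevel (inl w : V ⊕ V × Fin k) = 0 := rfl

@[simp]
lemma gadgetLevel_inr (w : V) (i : Fin k) :
    gadgetLevel (inr (w, i) : V ⊕ V × Fin k) = max i.val 1 := rfl

lemma gadgetLevel_le_of_adj {a b : V ⊕ V × Fin k} (h : (gadgetGraph G k).Adj a b) :
    gadgetLevel b ≤ gadgetLevel a + 1 := by
  rw [gadgetGraph, SimpleGraph.fromRel_adj] at h
  obtain ⟨-, h | h⟩ := h <;> rcases a with x | ⟨w, i⟩ <;> rcases b with y | ⟨w', j⟩ <;>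
    simp_all [gadgetRel, gadgetLevel] <;> omega

lemma gadgetGraph_adj_inr_of_level_le {w : V} {i : Fin k} {b : V ⊕ V × Fin k}
    (h : (gadgetGraph G k).Adj (inr (w, i)) b)
    (hb : gadgetLevel b ≤ gadgetLevel (inr (w, i) : V ⊕ V × Fin k)) :
    (i.val ≤ 1 ∧ b = inl w) ∨
      ∃ j : Fin k, b = inr (w, j) ∧ (j.val ≤ 1 ∧ i.val = 2 ∨ 2 ≤ j.val ∧ j.val + 1 = i.val) := by
  rw [gadgetGraph, SimpleGraph.fromRel_adj] at h
  rcases b with y | ⟨w', j⟩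
  · obtain ⟨-, h | ⟨rfl, h⟩⟩ := h
    exacts [h.elim, .inl ⟨by omega, rfl⟩]
  · obtain ⟨-, ⟨rfl, h⟩ | ⟨rfl, h⟩⟩ := h <;> rw [gadgetLevel_inr, gadgetLevel_inr] at hb <;>
      exact .inr ⟨j, rfl, by omega⟩

lemma gadgetLevel_getVert_le {v : V} {b : V ⊕ V × Fin k} (p : (gadgetGraph G k).Walk (inl v) b)
    (n : ℕ) : gadgetLevel (p.getVert n) ≤ n := by
  simpa using p.apply_getVert_le gadgetLevel_le_of_adj n

lemma gadgetGraph_le_length {v u : V} {x : Fin k}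
    (p : (gadgetGraph G k).Walk (inl v) (inr (u, x))) : x.val ≤ p.length := by
  have h := gadgetLevel_getVert_le p p.length
  rw [Walk.getVert_length, gadgetLevel_inr] at h
  omega

lemma gadgetGraph_getVert_length_sub {u v : V} {x : Fin k}
    (p : (gadgetGraph G k).Walk (inl v) (inr (u, x))) (hlen : p.length ≤ x.val + 1) (n : ℕ)
    (j : Fin k) (hj : 2 ≤ j.val) (hjn : j.val + n = x.val) :
    p.getVert (p.length - n) = inr (u, j) := by
  induction n generalizing j with
  | zero =>
    obtain rfl : j = x := Fin.ext (by omega)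
    exact p.getVert_length
  | succ n ih =>
    have hx := gadgetGraph_le_length p
    have hadj := p.adj_getVert_succ (show p.length - (n + 1) < p.length by omega)
    rw [show p.length - (n + 1) + 1 = p.length - n by omega,
      ih ⟨j + 1, by omega⟩ (by simp only; omega) (by simp only; omega)] at hadj
    have hlev := gadgetLevel_getVert_le p (p.length - (n + 1))
    rcases gadgetGraph_adj_inr_of_level_le hadj.symm (by simp only [gadgetLevel_inr]; omega) with
      ⟨h, -⟩ | ⟨j', hj', h⟩
    · simp only at h; omega
    · obtain rfl : j' = j := Fin.ext (by simp only at h; omega)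
      exact hj'

lemma gadgetGraph_getVert_of_length_le {u v : V} (huv : u ≠ v) {x : Fin k} (hx : 2 ≤ x.val)
    (p : (gadgetGraph G k).Walk (inl v) (inr (u, x))) (hlen : p.length ≤ x.val + 1) :
    p.length = x.val + 1 ∧ p.getVert 1 = inl u ∧
      (∃ a : Fin k, a.val ≤ 1 ∧ p.getVert 2 = inr (u, a)) ∧
      ∀ j : Fin k, 2 ≤ j.val → j ≤ x → p.getVert (j.val + 1) = inr (u, j) := by
  have hx' := gadgetGraph_le_length p
  set m := p.length - x.val
  have h2 : p.getVert (m + 2) = inr (u, ⟨2, by omega⟩) := by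
    rw [show m + 2 = p.length - (x.val - 2) by omega]
    exact gadgetGraph_getVert_length_sub p hlen _ _ le_rfl (by simp only; omega)
  obtain ⟨a, ha, h1⟩ : ∃ a : Fin k, a.val ≤ 1 ∧ p.getVert (m + 1) = inr (u, a) := by
    have hadj := p.adj_getVert_succ (show m + 1 < p.length by omega)
    rw [h2] at hadj
    have := gadgetLevel_getVert_le p (m + 1)
    rcases gadgetGraph_adj_inr_of_level_le hadj.symm (by simp only [gadgetLevel_inr]; omega) with
      ⟨h, -⟩ | ⟨a, ha, h⟩
    · simp at h
    · exact ⟨a, by simp only at h; omega, ha⟩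
  have h0 : p.getVert m = inl u := by
    have hadj := p.adj_getVert_succ (show m < p.length by omega)
    rw [h1] at hadj
    have := gadgetLevel_getVert_le p m
    rcases gadgetGraph_adj_inr_of_level_le hadj.symm (by rw [gadgetLevel_inr]; omega) with
      ⟨-, h⟩ | ⟨j, -, h⟩
    · exact h
    · omega
  obtain hm : m = 1 := by
    by_contra hm
    rw [show m = 0 by omega, Walk.getVert_zero] at h0
    exact huv (Sum.inl_injective h0).symm
  rw [hm] at h0 h1
  refine ⟨by omega, h0, ⟨a, ha, h1⟩, fun j hj hjx => ?_⟩
  rw [show j.val + 1 = p.length - (x.val - j.val) by omega]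
  exact gadgetGraph_getVert_length_sub p hlen _ j hj (by omega)

lemma gadgetGraph_support_of_length_le {u v : V} (huv : u ≠ v) {x : Fin k} (hx : 2 ≤ x.val)
    (p : (gadgetGraph G k).Walk (inl v) (inr (u, x))) (hlen : p.length ≤ x.val + 1) :
    ∃ a : Fin k, a.val ≤ 1 ∧ p.support = inl v :: inl u :: inr (u, a) ::
      List.ofFn (fun i : Fin (x.val - 1) => inr (u, ⟨i.val + 2, by have := i.isLt; omega⟩)) := by
  obtain ⟨hL, h1, ⟨a, ha, h2⟩, hj⟩ := gadgetGraph_getVert_of_length_le huv hx p hlen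
  refine ⟨a, ha, List.ext_getElem (by simp; omega) fun n hn _ => ?_⟩
  rw [Walk.support_getElem_eq_getVert]
  match n with
  | 0 => simp
  | 1 => simpa
  | 2 => simpa
  | n + 3 =>
    rw [Walk.length_support] at hn
    simpa using hj ⟨n + 2, by omega⟩ (Nat.le_add_left 2 n) (by simp only [Fin.le_def]; omega)

lemma gadgetGraph_color_le_one_of_rainbow {u v : V} (huv : u ≠ v) {x : Fin k} (hx : 2 ≤ x.val)
    (hxk : x.val + 1 = k) (c : Sym2 (V ⊕ V × Fin k) → Fin k)
    (hc : ∀ i j : Fin k, (i.val ≤ 1 ∧ j.val = 2 ∨ 2 ≤ i.val ∧ j.val = i.val + 1) →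
      c s(inr (u, i), inr (u, j)) = j)
    (p : (gadgetGraph G k).Walk (inl v) (inr (u, x))) (hp : (p.edges.map c).Nodup) :
    (c s(inl v, inl u)).val ≤ 1 := by
  have hlen : p.length ≤ k := by simpa using hp.length_le_card
  obtain ⟨hL, h1, ⟨a, ha, h2⟩, hj⟩ := gadgetGraph_getVert_of_length_le huv hx p (by omega)
  have hcolor : ∀ t : Fin k, 2 ≤ t.val → c (p.edges[t.val]'(by simp; omega)) = t := by
    intro t ht
    rw [Walk.getElem_edges, hj t ht (by rw [Fin.le_def]; omega)]
    rcases ht.eq_or_lt with ht2 | ht3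
    · rw [← ht2, h2]
      exact hc a t (.inl ⟨ha, ht2.symm⟩)
    · have hprev := hj ⟨t - 1, by omega⟩ (by simp only; omega) (by simp only [Fin.le_def]; omega)
      simp only [show t.val - 1 + 1 = t.val by omega] at hprev
      rw [hprev]
      exact hc _ t (.inr ⟨by simp only; omega, by simp only; omega⟩)
  by_contra! hgt
  have h0 : c (p.edges[0]'(by simp; omega)) = c s(inl v, inl u) := by
    rw [Walk.getElem_edges, Walk.getVert_zero, h1]
  have := (hp.getElem_inj_iff (i := 0) (j := (c s(inl v, inl u)).val) (hi := by simp; omega)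
    (hj := by simp; omega)).1 (by simp only [List.getElem_map, h0, hcolor _ hgt])
  omega

end

/-- let `k ≥ 3`, let `uv ∈ E(G)` with `u < v`.  In the augmented graph,
(1) every path of length at most `k` from `v` to `u_{k−1}` is one of the two paths
`v u u₁¹ u₂ ⋯ u_{k−1}` and `v u u₁² u₂ ⋯ u_{k−1}`, and
(2) for every `k`-edge-coloring (colors `Fin k`, color `j` of the paper being index
`j − 1`) extending the gadget pre-coloring `c(w w₁¹)=1, c(w w₁²)=2,
c(w₁¹ w₂)=c(w₁² w₂)=3, c(w_i w_{i+1})=i+2 (2 ≤ i ≤ k−2)`, if `u_{k−1}` and `v` are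
joined by a rainbow path then the edge `uv` gets color `1` or color `2`. -/
theorem stmt_16 {V : Type*} [LinearOrder V] (k : ℕ) (hk : 3 ≤ k)
    (G : SimpleGraph V) (u v : V) (hlt : u < v) :
    (∀ p : (gadgetGraph G k).Walk (inl v) (inr (u, ⟨k - 1, by omega⟩)),
        p.IsPath → p.length ≤ k →
        p.support =
          inl v :: inl u :: inr (u, ⟨0, by omega⟩) ::
            List.ofFn (fun i : Fin (k - 2) =>
              inr (u, ⟨i.val + 2, by have := i.isLt; omega⟩)) ∨
        p.support =
          inl v :: inl u :: inr (u, ⟨1, by omega⟩) ::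
            List.ofFn (fun i : Fin (k - 2) =>
              inr (u, ⟨i.val + 2, by have := i.isLt; omega⟩))) ∧
    (∀ c : Sym2 (V ⊕ V × Fin k) → Fin k,
        (∀ w : V, c s(inl w, inr (w, ⟨0, by omega⟩)) = ⟨0, by omega⟩) →
        (∀ w : V, c s(inl w, inr (w, ⟨1, by omega⟩)) = ⟨1, by omega⟩) →
        (∀ w : V, c s(inr (w, ⟨0, by omega⟩), inr (w, ⟨2, by omega⟩)) = ⟨2, by omega⟩) →
        (∀ w : V, c s(inr (w, ⟨1, by omega⟩), inr (w, ⟨2, by omega⟩)) = ⟨2, by omega⟩) →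
        (∀ (w : V) (i : ℕ) (h2 : 2 ≤ i) (hik : i + 1 ≤ k - 1),
          c s(inr (w, ⟨i, by omega⟩), inr (w, ⟨i + 1, by omega⟩)) = ⟨i + 1, by omega⟩) →
        (∃ p : (gadgetGraph G k).Walk (inl v) (inr (u, ⟨k - 1, by omega⟩)),
          p.IsPath ∧ (p.edges.map c).Nodup) →
        (c s(inl u, inl v) = ⟨0, by omega⟩ ∨ c s(inl u, inl v) = ⟨1, by omega⟩)) := by
  refine ⟨fun p _ hlen => ?_, fun c _ _ h2a h2b h5 ⟨p, _, hp⟩ => ?_⟩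
  · obtain ⟨a, ha, hsupp⟩ :=
      gadgetGraph_support_of_length_le hlt.ne (by simp only; omega) p (by simp only; omega)
    obtain ⟨_ | _ | _, _⟩ := a
    exacts [.inl hsupp, .inr hsupp, by simp at ha]
  · have hc : ∀ i j : Fin k, (i.val ≤ 1 ∧ j.val = 2 ∨ 2 ≤ i.val ∧ j.val = i.val + 1) →
        c s(inr (u, i), inr (u, j)) = j := by
      rintro ⟨i, hi⟩ ⟨j, hj⟩ (⟨hi1, rfl⟩ | ⟨hi2, rfl⟩)
      · obtain rfl | rfl : i = 0 ∨ i = 1 := by simp only at hi1; omega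
        exacts [h2a u, h2b u]
      · exact h5 u i hi2 (by simp only at hj; omega)
    have := gadgetGraph_color_le_one_of_rainbow hlt.ne (by simp only; omega) (by simp only; omega)
      c hc p hp
    rw [Sym2.eq_swap]
    simp only [Fin.ext_iff]
    omega
end
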